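/- The translation ♯ from CbV-BLC into CbV-DC→← preserves typing: if Π;Σ ⊢₊ E : A then Π♯_X ⊢ Σ♯_Y | E♯ : A; if Π;Σ ⊢₋ C : A then C♯ : A | Π♯_X ⊢ Σ♯_Y; and if Π;Σ ⊢ₒ N then Π♯_X | N♯ ⊢ Σ♯_Y, where X and Y contain all expression/continuation constants occurring in the translated object and Π♯_X extends Π with x_{cstᵒ}:o for cstᵒ ∈ X (dually Σ♯_Y). -/

import Mathlib

set_option autoImplicit true
set_option relaxedAutoImplicit true

namespace BLC

mutual
/-- Expressions of CbV-BLC (Curry style). -/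
inductive Expr : Type
  | cst : ℕ → Expr                  -- constant cstᵒ
  | var : ℕ → Expr
  | lam : ℕ → Expr → Expr
  | app : Expr → Expr → Expr
  | pair : Expr → Expr → Expr
  | fst : Expr → Expr
  | snd : Expr → Expr
  | mu : ℕ → Cmd → Expr             -- μa.N
deriving DecidableEq
/-- Continuations of CbV-BLC. -/
inductive Cont : Type
  | cst : ℕ → Cont                  -- •ᵒ
  | var : ℕ → Cont
  | lam : ℕ → Cont → Cont
  | app : Cont → Cont → Cont
  | pair : Cont → Cont → Cont
  | fst : Cont → Cont
  | snd : Cont → Cont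
  | mu : ℕ → Cmd → Cont             -- μx.N
deriving DecidableEq
/-- Commands. -/
inductive Cmd : Type
  | cut : Expr → Cont → Cmd
deriving DecidableEq
end

mutual
def substEE (V : Expr) (x : ℕ) : Expr → Expr
  | .cst o => .cst o
  | .var y => if y = x then V else .var y
  | .lam y E => if y = x then .lam y E else .lam y (substEE V x E)
  | .app E0 E1 => .app (substEE V x E0) (substEE V x E1)
  | .pair E0 E1 => .pair (substEE V x E0) (substEE V x E1)
  | .fst E => .fst (substEE V x E)
  | .snd E => .snd (substEE V x E)
  | .mu a N => .mu a (substEN V x N)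
def substEC (V : Expr) (x : ℕ) : Cont → Cont
  | .cst o => .cst o
  | .var a => .var a
  | .lam a C => .lam a (substEC V x C)
  | .app C0 C1 => .app (substEC V x C0) (substEC V x C1)
  | .pair C0 C1 => .pair (substEC V x C0) (substEC V x C1)
  | .fst C => .fst (substEC V x C)
  | .snd C => .snd (substEC V x C)
  | .mu y N => if y = x then .mu y N else .mu y (substEN V x N)
def substEN (V : Expr) (x : ℕ) : Cmd → Cmd
  | .cut E C => .cut (substEE V x E) (substEC V x C)
end

mutual
def substCE (K : Cont) (a : ℕ) : Expr → Expr
  | .cst o => .cst o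
  | .var y => .var y
  | .lam y E => .lam y (substCE K a E)
  | .app E0 E1 => .app (substCE K a E0) (substCE K a E1)
  | .pair E0 E1 => .pair (substCE K a E0) (substCE K a E1)
  | .fst E => .fst (substCE K a E)
  | .snd E => .snd (substCE K a E)
  | .mu b N => if b = a then .mu b N else .mu b (substCN K a N)
def substCC (K : Cont) (a : ℕ) : Cont → Cont
  | .cst o => .cst o
  | .var b => if b = a then K else .var b
  | .lam b C => if b = a then .lam b C else .lam b (substCC K a C)
  | .app C0 C1 => .app (substCC K a C0) (substCC K a C1)
  | .pair C0 C1 => .pair (substCC K a C0) (substCC K a C1)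
  | .fst C => .fst (substCC K a C)
  | .snd C => .snd (substCC K a C)
  | .mu y N => .mu y (substCN K a N)
def substCN (K : Cont) (a : ℕ) : Cmd → Cmd
  | .cut E C => .cut (substCE K a E) (substCC K a C)
end

mutual
def fevE : Expr → Finset ℕ
  | .cst _ => ∅
  | .var x => {x}
  | .lam x E => fevE E \ {x}
  | .app E0 E1 => fevE E0 ∪ fevE E1
  | .pair E0 E1 => fevE E0 ∪ fevE E1
  | .fst E => fevE E
  | .snd E => fevE E
  | .mu _ N => fevN N
def fevC : Cont → Finset ℕ
  | .cst _ => ∅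
  | .var _ => ∅
  | .lam _ C => fevC C
  | .app C0 C1 => fevC C0 ∪ fevC C1
  | .pair C0 C1 => fevC C0 ∪ fevC C1
  | .fst C => fevC C
  | .snd C => fevC C
  | .mu x N => fevN N \ {x}
def fevN : Cmd → Finset ℕ
  | .cut E C => fevE E ∪ fevC C
end

mutual
def fcvE : Expr → Finset ℕ
  | .cst _ => ∅
  | .var _ => ∅
  | .lam _ E => fcvE E
  | .app E0 E1 => fcvE E0 ∪ fcvE E1
  | .pair E0 E1 => fcvE E0 ∪ fcvE E1
  | .fst E => fcvE E
  | .snd E => fcvE E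
  | .mu a N => fcvN N \ {a}
def fcvC : Cont → Finset ℕ
  | .cst _ => ∅
  | .var a => {a}
  | .lam a C => fcvC C \ {a}
  | .app C0 C1 => fcvC C0 ∪ fcvC C1
  | .pair C0 C1 => fcvC C0 ∪ fcvC C1
  | .fst C => fcvC C
  | .snd C => fcvC C
  | .mu _ N => fcvN N
def fcvN : Cmd → Finset ℕ
  | .cut E C => fcvE E ∪ fcvC C
end

/-- Values of CbV-BLC. -/
inductive IsVal : Expr → Prop
  | cst {o} : IsVal (.cst o)
  | var {x} : IsVal (.var x)
  | lam {x E} : IsVal (.lam x E)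
  | pair {V0 V1} : IsVal V0 → IsVal V1 → IsVal (.pair V0 V1)
  | fst {V} : IsVal V → IsVal (.fst V)
  | snd {V} : IsVal V → IsVal (.snd V)
  | muFst {V a} : IsVal V → IsVal (.mu a (.cut V (Cont.fst (Cont.var a))))
  | muSnd {V a} : IsVal V → IsVal (.mu a (.cut V (Cont.snd (Cont.var a))))

end BLC

namespace DCB

/-- Variables and covariables of CbV-DC→←: `Sum.inl n` is an ordinary
(co)variable, `Sum.inr o` is the (co)variable associated to a constant. -/
abbrev DV := ℕ ⊕ ℕ

mutual
/-- Terms of the call-by-value dual calculus with implication and but-not. -/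
inductive Tm : Type
  | var : DV → Tm
  | lam : DV → Tm → Tm              -- λx.M
  | dollar : Tm → Co → Tm           -- M $ K  (but-not term)
  | pair : Tm → Tm → Tm
  | inl : Tm → Tm
  | inr : Tm → Tm
  | bnd : DV → St → Tm              -- (α).S
deriving DecidableEq
/-- Coterms. -/
inductive Co : Type
  | cov : DV → Co
  | coabs : DV → Co → Co            -- λα.K  (but-not coterm)
  | ap : Tm → Co → Co               -- M @ K (application coterm)
  | copair : Co → Co → Co
  | fst : Co → Co
  | snd : Co → Co
  | bnd : DV → St → Co              -- (x).S
deriving DecidableEq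
/-- Statements. -/
inductive St : Type
  | cut : Tm → Co → St
deriving DecidableEq
end

mutual
def substTmT (W : Tm) (x : DV) : Tm → Tm
  | .var y => if y = x then W else .var y
  | .lam y M => if y = x then .lam y M else .lam y (substTmT W x M)
  | .dollar M K => .dollar (substTmT W x M) (substTmC W x K)
  | .pair M0 M1 => .pair (substTmT W x M0) (substTmT W x M1)
  | .inl M => .inl (substTmT W x M)
  | .inr M => .inr (substTmT W x M)
  | .bnd a S => .bnd a (substTmS W x S)
def substTmC (W : Tm) (x : DV) : Co → Co
  | .cov a => .cov a
  | .coabs a K => .coabs a (substTmC W x K)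
  | .ap M K => .ap (substTmT W x M) (substTmC W x K)
  | .copair K0 K1 => .copair (substTmC W x K0) (substTmC W x K1)
  | .fst K => .fst (substTmC W x K)
  | .snd K => .snd (substTmC W x K)
  | .bnd y S => if y = x then .bnd y S else .bnd y (substTmS W x S)
def substTmS (W : Tm) (x : DV) : St → St
  | .cut M K => .cut (substTmT W x M) (substTmC W x K)
end

mutual
def substCoT (L : Co) (a : DV) : Tm → Tm
  | .var y => .var y
  | .lam y M => .lam y (substCoT L a M)
  | .dollar M K => .dollar (substCoT L a M) (substCoC L a K)
  | .pair M0 M1 => .pair (substCoT L a M0) (substCoT L a M1)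
  | .inl M => .inl (substCoT L a M)
  | .inr M => .inr (substCoT L a M)
  | .bnd b S => if b = a then .bnd b S else .bnd b (substCoS L a S)
def substCoC (L : Co) (a : DV) : Co → Co
  | .cov b => if b = a then L else .cov b
  | .coabs b K => if b = a then .coabs b K else .coabs b (substCoC L a K)
  | .ap M K => .ap (substCoT L a M) (substCoC L a K)
  | .copair K0 K1 => .copair (substCoC L a K0) (substCoC L a K1)
  | .fst K => .fst (substCoC L a K)
  | .snd K => .snd (substCoC L a K)
  | .bnd y S => .bnd y (substCoS L a S)
def substCoS (L : Co) (a : DV) : St → St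
  | .cut M K => .cut (substCoT L a M) (substCoC L a K)
end

mutual
def ftvT : Tm → Finset DV
  | .var x => {x}
  | .lam x M => ftvT M \ {x}
  | .dollar M K => ftvT M ∪ ftvC K
  | .pair M0 M1 => ftvT M0 ∪ ftvT M1
  | .inl M => ftvT M
  | .inr M => ftvT M
  | .bnd _ S => ftvS S
def ftvC : Co → Finset DV
  | .cov _ => ∅
  | .coabs _ K => ftvC K
  | .ap M K => ftvT M ∪ ftvC K
  | .copair K0 K1 => ftvC K0 ∪ ftvC K1
  | .fst K => ftvC K
  | .snd K => ftvC K
  | .bnd x S => ftvS S \ {x}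
def ftvS : St → Finset DV
  | .cut M K => ftvT M ∪ ftvC K
end

mutual
def fcvT : Tm → Finset DV
  | .var _ => ∅
  | .lam _ M => fcvT M
  | .dollar M K => fcvT M ∪ fcvC K
  | .pair M0 M1 => fcvT M0 ∪ fcvT M1
  | .inl M => fcvT M
  | .inr M => fcvT M
  | .bnd a S => fcvS S \ {a}
def fcvC : Co → Finset DV
  | .cov a => {a}
  | .coabs a K => fcvC K \ {a}
  | .ap M K => fcvT M ∪ fcvC K
  | .copair K0 K1 => fcvC K0 ∪ fcvC K1
  | .fst K => fcvC K
  | .snd K => fcvC K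
  | .bnd _ S => fcvS S
def fcvS : St → Finset DV
  | .cut M K => fcvT M ∪ fcvC K
end

/-- Values of CbV-DC→←. -/
inductive IsVal : Tm → Prop
  | var {x} : IsVal (.var x)
  | lam {x M} : IsVal (.lam x M)
  | dollar {W K} : IsVal W → IsVal (.dollar W K)
  | pair {W0 W1} : IsVal W0 → IsVal W1 → IsVal (.pair W0 W1)
  | inl {W} : IsVal W → IsVal (.inl W)
  | inr {W} : IsVal W → IsVal (.inr W)
  | bndFst {W a} : IsVal W → IsVal (.bnd a (.cut W (.fst (.cov a))))
  | bndSnd {W a} : IsVal W → IsVal (.bnd a (.cut W (.snd (.cov a))))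

/-- A (co)variable not occurring in the given finite set. -/
def freshDV (s : Finset DV) : DV :=
  Sum.inl ((s.image (Sum.elim id id)).sup id + 1)

end DCB

namespace BLC

open DCB in
mutual
/-- The translation ♯ from CbV-BLC expressions to CbV-DC→← terms. -/
def shE : Expr → Tm
  | .cst o => .var (.inr o)
  | .var n => .var (.inl n)
  | .lam x E => .lam (.inl x) (shE E)
  | .app E0 E1 =>
      let M0 := shE E0
      let M1 := shE E1
      let a := freshDV (fcvT M0 ∪ fcvT M1)
      .bnd a (.cut M0 (.ap M1 (.cov a)))
  | .pair E0 E1 => .pair (shE E0) (shE E1)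
  | .fst E =>
      let M := shE E
      let a := freshDV (fcvT M)
      .bnd a (.cut M (.fst (.cov a)))
  | .snd E =>
      let M := shE E
      let a := freshDV (fcvT M)
      .bnd a (.cut M (.snd (.cov a)))
  | .mu a N => .bnd (.inl a) (shN N)
/-- The translation ♯ from CbV-BLC continuations to CbV-DC→← coterms. -/
def shC : Cont → Co
  | .cst o => .cov (.inr o)
  | .var n => .cov (.inl n)
  | .lam a C => .coabs (.inl a) (shC C)
  | .app C0 C1 =>
      let K0 := shC C0
      let K1 := shC C1
      let x := freshDV (ftvC K0 ∪ ftvC K1)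
      .bnd x (.cut (.dollar (.var x) K1) K0)
  | .pair C0 C1 => .copair (shC C0) (shC C1)
  | .fst C =>
      let K := shC C
      let x := freshDV (ftvC K)
      .bnd x (.cut (.inl (.var x)) K)
  | .snd C =>
      let K := shC C
      let x := freshDV (ftvC K)
      .bnd x (.cut (.inr (.var x)) K)
  | .mu x N => .bnd (.inl x) (shN N)
/-- The translation ♯ on commands. -/
def shN : Cmd → St
  | .cut E C => .cut (shE E) (shC C)
end

end BLC

/-- Types, shared by CbV-BLC and CbV-DC→← (implication and but-not primitive). -/
inductive Ty : Type
  | base : ℕ → Ty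
  | imp : Ty → Ty → Ty
  | bnot : Ty → Ty → Ty
  | and : Ty → Ty → Ty
  | or : Ty → Ty → Ty
deriving DecidableEq

namespace BLC

abbrev Ctx := List (ℕ × Ty)

mutual
/-- Π;Σ ⊢₊ E : A. -/
inductive TE : Ctx → Ctx → Expr → Ty → Prop
  | cst {P S o} : TE P S (.cst o) (.base o)
  | var {P S x A} : (x, A) ∈ P → TE P S (.var x) A
  | lam {P S x A0 E A1} : TE ((x, A0) :: P) S E A1 → TE P S (.lam x E) (.imp A0 A1)
  | app {P S E0 E1 A0 A1} : TE P S E0 (.imp A0 A1) → TE P S E1 A0 → TE P S (.app E0 E1) A1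
  | pair {P S E0 E1 A0 A1} : TE P S E0 A0 → TE P S E1 A1 → TE P S (.pair E0 E1) (.and A0 A1)
  | fst {P S E A0 A1} : TE P S E (.and A0 A1) → TE P S (.fst E) A0
  | snd {P S E A0 A1} : TE P S E (.and A0 A1) → TE P S (.snd E) A1
  | mu {P S a A N} : TN P ((a, A) :: S) N → TE P S (.mu a N) A
/-- Π;Σ ⊢₋ C : A. -/
inductive TC : Ctx → Ctx → Cont → Ty → Prop
  | cst {P S o} : TC P S (.cst o) (.base o)
  | var {P S a A} : (a, A) ∈ S → TC P S (.var a) A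
  | lam {P S a A1 C A0} : TC P ((a, A1) :: S) C A0 → TC P S (.lam a C) (.bnot A0 A1)
  | app {P S C0 C1 A0 A1} : TC P S C0 (.bnot A0 A1) → TC P S C1 A1 → TC P S (.app C0 C1) A0
  | pair {P S C0 C1 A0 A1} : TC P S C0 A0 → TC P S C1 A1 → TC P S (.pair C0 C1) (.or A0 A1)
  | fst {P S C A0 A1} : TC P S C (.or A0 A1) → TC P S (.fst C) A0
  | snd {P S C A0 A1} : TC P S C (.or A0 A1) → TC P S (.snd C) A1
  | mu {P S x A N} : TN ((x, A) :: P) S N → TC P S (.mu x N) A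
/-- Π;Σ ⊢ₒ N. -/
inductive TN : Ctx → Ctx → Cmd → Prop
  | cut {P S E C A} : TE P S E A → TC P S C A → TN P S (.cut E C)
end

mutual
/-- Expression constants cstᵒ occurring in an expression. -/
def consPE : Expr → Finset ℕ
  | .cst o => {o}
  | .var _ => ∅
  | .lam _ E => consPE E
  | .app E0 E1 => consPE E0 ∪ consPE E1
  | .pair E0 E1 => consPE E0 ∪ consPE E1
  | .fst E => consPE E
  | .snd E => consPE E
  | .mu _ N => consPN N
def consPC : Cont → Finset ℕ
  | .cst _ => ∅
  | .var _ => ∅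
  | .lam _ C => consPC C
  | .app C0 C1 => consPC C0 ∪ consPC C1
  | .pair C0 C1 => consPC C0 ∪ consPC C1
  | .fst C => consPC C
  | .snd C => consPC C
  | .mu _ N => consPN N
def consPN : Cmd → Finset ℕ
  | .cut E C => consPE E ∪ consPC C
end

mutual
/-- Continuation constants •ᵒ occurring in an expression. -/
def consME : Expr → Finset ℕ
  | .cst _ => ∅
  | .var _ => ∅
  | .lam _ E => consME E
  | .app E0 E1 => consME E0 ∪ consME E1
  | .pair E0 E1 => consME E0 ∪ consME E1
  | .fst E => consME E
  | .snd E => consME E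
  | .mu _ N => consMN N
def consMC : Cont → Finset ℕ
  | .cst o => {o}
  | .var _ => ∅
  | .lam _ C => consMC C
  | .app C0 C1 => consMC C0 ∪ consMC C1
  | .pair C0 C1 => consMC C0 ∪ consMC C1
  | .fst C => consMC C
  | .snd C => consMC C
  | .mu _ N => consMN N
def consMN : Cmd → Finset ℕ
  | .cut E C => consME E ∪ consMC C
end

end BLC

namespace DCB

abbrev DCtx := List (DV × Ty)

mutual
/-- Γ ⊢ Δ | M : A (term judgment of CbV-DC→←). -/
inductive TT : DCtx → DCtx → Tm → Ty → Prop
  | var {G D x A} : (x, A) ∈ G → TT G D (.var x) A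
  | lam {G D x A0 M A1} : TT ((x, A0) :: G) D M A1 → TT G D (.lam x M) (.imp A0 A1)
  | dollar {G D M K A0 A1} : TT G D M A0 → TK G D K A1 → TT G D (.dollar M K) (.bnot A0 A1)
  | pair {G D M0 M1 A0 A1} : TT G D M0 A0 → TT G D M1 A1 → TT G D (.pair M0 M1) (.and A0 A1)
  | inl {G D M A0 A1} : TT G D M A0 → TT G D (.inl M) (.or A0 A1)
  | inr {G D M A0 A1} : TT G D M A1 → TT G D (.inr M) (.or A0 A1)
  | bnd {G D a A S} : TS G ((a, A) :: D) S → TT G D (.bnd a S) A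
/-- K : A | Γ ⊢ Δ (coterm judgment). -/
inductive TK : DCtx → DCtx → Co → Ty → Prop
  | cov {G D a A} : (a, A) ∈ D → TK G D (.cov a) A
  | coabs {G D a A1 K A0} : TK G ((a, A1) :: D) K A0 → TK G D (.coabs a K) (.bnot A0 A1)
  | ap {G D M K A0 A1} : TT G D M A0 → TK G D K A1 → TK G D (.ap M K) (.imp A0 A1)
  | copair {G D K0 K1 A0 A1} : TK G D K0 A0 → TK G D K1 A1 → TK G D (.copair K0 K1) (.or A0 A1)
  | fst {G D K A0 A1} : TK G D K A0 → TK G D (.fst K) (.and A0 A1)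
  | snd {G D K A0 A1} : TK G D K A1 → TK G D (.snd K) (.and A0 A1)
  | bnd {G D x A S} : TS ((x, A) :: G) D S → TK G D (.bnd x S) A
/-- Γ | S ⊢ Δ (statement judgment). -/
inductive TS : DCtx → DCtx → St → Prop
  | cut {G D M K A} : TT G D M A → TK G D K A → TS G D (.cut M K)
end

end DCB

namespace BLC

/-- The translated positive environment Π♯_X: ordinary variables of Π plus a
variable x_{cstᵒ} : o for each constant cstᵒ ∈ X. -/
def sharpCtxP (P : Ctx) (X : Finset ℕ) : DCB.DCtx :=
  P.map (fun p => (Sum.inl p.1, p.2)) ++ (X.sort (· ≤ ·)).map (fun o => (Sum.inr o, Ty.base o))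

/-- The translated negative environment Σ♯_Y. -/
def sharpCtxS (S : Ctx) (Y : Finset ℕ) : DCB.DCtx :=
  S.map (fun p => (Sum.inl p.1, p.2)) ++ (Y.sort (· ≤ ·)).map (fun o => (Sum.inr o, Ty.base o))

end BLC

/-!
The translation is compositional except for application and the projections, which
introduce a bound (co)variable `(α).S` or `(x).S`. Its freshness plays no role for typing:
the new binding is pushed on the front of the context and the translated subterms are
typed there by weakening. Constants become (co)variables declared in `Π♯_X`, `Σ♯_Y`.
-/

namespace DCB

mutual
theorem TT.mono {G G' D D' : DCtx} {M : Tm} {A : Ty} (hG : G ⊆ G') (hD : D ⊆ D') :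
    TT G D M A → TT G' D' M A
  | .var hx => .var (hG hx)
  | .lam h => .lam (h.mono (List.cons_subset_cons _ hG) hD)
  | .dollar hM hK => .dollar (hM.mono hG hD) (hK.mono hG hD)
  | .pair h0 h1 => .pair (h0.mono hG hD) (h1.mono hG hD)
  | .inl h => .inl (h.mono hG hD)
  | .inr h => .inr (h.mono hG hD)
  | .bnd h => .bnd (h.mono hG (List.cons_subset_cons _ hD))
theorem TK.mono {G G' D D' : DCtx} {K : Co} {A : Ty} (hG : G ⊆ G') (hD : D ⊆ D') :
    TK G D K A → TK G' D' K A
  | .cov ha => .cov (hD ha)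
  | .coabs h => .coabs (h.mono hG (List.cons_subset_cons _ hD))
  | .ap hM hK => .ap (hM.mono hG hD) (hK.mono hG hD)
  | .copair h0 h1 => .copair (h0.mono hG hD) (h1.mono hG hD)
  | .fst h => .fst (h.mono hG hD)
  | .snd h => .snd (h.mono hG hD)
  | .bnd h => .bnd (h.mono (List.cons_subset_cons _ hG) hD)
theorem TS.mono {G G' D D' : DCtx} {S : St} (hG : G ⊆ G') (hD : D ⊆ D') :
    TS G D S → TS G' D' S
  | .cut hM hK => .cut (hM.mono hG hD) (hK.mono hG hD)
end

theorem TT.cons_right {G D : DCtx} {M : Tm} {A : Ty} (b : DV × Ty) (h : TT G D M A) :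
    TT G (b :: D) M A :=
  h.mono (List.Subset.refl G) (List.subset_cons_self b D)

theorem TK.cons_left {G D : DCtx} {K : Co} {A : Ty} (b : DV × Ty) (h : TK G D K A) :
    TK (b :: G) D K A :=
  h.mono (List.subset_cons_self b G) (List.Subset.refl D)

end DCB

namespace BLC

open DCB

theorem mem_sharpCtxP_inl {P : Ctx} {x : ℕ} {A : Ty} (X : Finset ℕ) (h : (x, A) ∈ P) :
    (Sum.inl x, A) ∈ sharpCtxP P X :=
  List.mem_append_left _ (List.mem_map_of_mem h)

theorem mem_sharpCtxP_inr (P : Ctx) {X : Finset ℕ} {o : ℕ} (h : o ∈ X) :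
    (Sum.inr o, Ty.base o) ∈ sharpCtxP P X :=
  List.mem_append_right _ (List.mem_map_of_mem ((Finset.mem_sort _).2 h))

theorem mem_sharpCtxS_inl {S : Ctx} {a : ℕ} {A : Ty} (Y : Finset ℕ) (h : (a, A) ∈ S) :
    (Sum.inl a, A) ∈ sharpCtxS S Y :=
  List.mem_append_left _ (List.mem_map_of_mem h)

theorem mem_sharpCtxS_inr (S : Ctx) {Y : Finset ℕ} {o : ℕ} (h : o ∈ Y) :
    (Sum.inr o, Ty.base o) ∈ sharpCtxS S Y :=
  List.mem_append_right _ (List.mem_map_of_mem ((Finset.mem_sort _).2 h))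

open Finset in
mutual
theorem TE.sharp {P S : Ctx} {E : Expr} {A : Ty} {X Y : Finset ℕ} :
    TE P S E A → consPE E ⊆ X → consME E ⊆ Y →
      TT (sharpCtxP P X) (sharpCtxS S Y) (shE E) A
  | .cst, hX, _ => .var (mem_sharpCtxP_inr P (singleton_subset_iff.1 hX))
  | .var hx, _, _ => .var (mem_sharpCtxP_inl X hx)
  | .lam h, hX, hY => .lam (h.sharp hX hY)
  | .app h0 h1, hX, hY =>
    .bnd (.cut ((h0.sharp (union_subset_left hX) (union_subset_left hY)).cons_right _)
      (.ap ((h1.sharp (union_subset_right hX) (union_subset_right hY)).cons_right _)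
        (.cov List.mem_cons_self)))
  | .pair h0 h1, hX, hY =>
    .pair (h0.sharp (union_subset_left hX) (union_subset_left hY))
      (h1.sharp (union_subset_right hX) (union_subset_right hY))
  | .fst h, hX, hY =>
    .bnd (.cut ((h.sharp hX hY).cons_right _) (.fst (.cov List.mem_cons_self)))
  | .snd h, hX, hY =>
    .bnd (.cut ((h.sharp hX hY).cons_right _) (.snd (.cov List.mem_cons_self)))
  | .mu h, hX, hY => .bnd (h.sharp hX hY)
theorem TC.sharp {P S : Ctx} {C : Cont} {A : Ty} {X Y : Finset ℕ} :
    TC P S C A → consPC C ⊆ X → consMC C ⊆ Y →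
      TK (sharpCtxP P X) (sharpCtxS S Y) (shC C) A
  | .cst, _, hY => .cov (mem_sharpCtxS_inr S (singleton_subset_iff.1 hY))
  | .var ha, _, _ => .cov (mem_sharpCtxS_inl Y ha)
  | .lam h, hX, hY => .coabs (h.sharp hX hY)
  | .app h0 h1, hX, hY =>
    .bnd (.cut (.dollar (.var List.mem_cons_self)
        ((h1.sharp (union_subset_right hX) (union_subset_right hY)).cons_left _))
      ((h0.sharp (union_subset_left hX) (union_subset_left hY)).cons_left _))
  | .pair h0 h1, hX, hY =>
    .copair (h0.sharp (union_subset_left hX) (union_subset_left hY))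
      (h1.sharp (union_subset_right hX) (union_subset_right hY))
  | .fst h, hX, hY =>
    .bnd (.cut (.inl (.var List.mem_cons_self)) ((h.sharp hX hY).cons_left _))
  | .snd h, hX, hY =>
    .bnd (.cut (.inr (.var List.mem_cons_self)) ((h.sharp hX hY).cons_left _))
  | .mu h, hX, hY => .bnd (h.sharp hX hY)
theorem TN.sharp {P S : Ctx} {N : Cmd} {X Y : Finset ℕ} :
    TN P S N → consPN N ⊆ X → consMN N ⊆ Y → TS (sharpCtxP P X) (sharpCtxS S Y) (shN N)
  | .cut hE hC, hX, hY =>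
    .cut (hE.sharp (union_subset_left hX) (union_subset_left hY))
      (hC.sharp (union_subset_right hX) (union_subset_right hY))
end

/-- Proposition 17: the translation ♯ from CbV-BLC into CbV-DC→← preserves
typing, for any sets X, Y of constants covering those occurring in the object. -/
theorem sharp_preserves_typing :
    (∀ (P S : Ctx) (E : Expr) (A : Ty), TE P S E A →
      ∀ (X Y : Finset ℕ), consPE E ⊆ X → consME E ⊆ Y →
        DCB.TT (sharpCtxP P X) (sharpCtxS S Y) (shE E) A) ∧
    (∀ (P S : Ctx) (C : Cont) (A : Ty), TC P S C A →
      ∀ (X Y : Finset ℕ), consPC C ⊆ X → consMC C ⊆ Y →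
        DCB.TK (sharpCtxP P X) (sharpCtxS S Y) (shC C) A) ∧
    (∀ (P S : Ctx) (N : Cmd), TN P S N →
      ∀ (X Y : Finset ℕ), consPN N ⊆ X → consMN N ⊆ Y →
        DCB.TS (sharpCtxP P X) (sharpCtxS S Y) (shN N)) :=
  ⟨fun _ _ _ _ h _ _ => h.sharp, fun _ _ _ _ h _ _ => h.sharp, fun _ _ _ h _ _ => h.sharp⟩

end BLC
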